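/- Let A ∈ ℝ^{n×n}, B ∈ ℝ^{m×m}, C1 ∈ ℝ^{n×s}, C2 ∈ ℝ^{m×s}, F := I_m ⊗ A + Bᵀ ⊗ I_n, and c := vec(C1 C2ᵀ). Then for every natural number i, F^i c = Σ_{l=0}^{i} binom(i,l) · [ ((Bᵀ)^{i-l} C2) ⊗ (A^l C1) ] · vec(I_s). -/

import Mathlib

/-!
The two summands `1 ⊗ₖ A` and `Bᵀ ⊗ₖ 1` of `F` commute, so the binomial theorem expands
`F ^ i` into `∑ choose i l • ((Bᵀ) ^ (i - l) ⊗ₖ A ^ l)`. Each term acts on `vec (C1 * C2ᵀ)` as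
`vec (A ^ l * C1 * C2ᵀ * B ^ (i - l))`, which is also what `(Bᵀ ^ (i - l) * C2) ⊗ₖ (A ^ l * C1)`
does to `vec 1`, by the identity `(M ⊗ₖ N) *ᵥ vec X = vec (N * X * Mᵀ)`.
-/

open Matrix Kronecker

noncomputable section

/-- `vec X` stacks the columns of `X` on top of each other; the entry of `vec X`
indexed by `(j, i)` (column `j`, row `i`) is `X i j`. -/
def vec {n m : ℕ} (X : Matrix (Fin n) (Fin m) ℝ) : Fin m × Fin n → ℝ :=
  fun p => X p.2 p.1

theorem vec_eq_matrix_vec {n m : ℕ} (X : Matrix (Fin n) (Fin m) ℝ) : _root_.vec X = X.vec :=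
  rfl

namespace Matrix

variable {R : Type*} [CommSemiring R] {l m n p q : Type*} [Fintype m] [Fintype n]

section Square

variable [DecidableEq m] [DecidableEq n]

theorem kronecker_pow (A : Matrix m m R) (B : Matrix n n R) (k : ℕ) :
    (A ⊗ₖ B) ^ k = (A ^ k) ⊗ₖ (B ^ k) := by
  induction k with
  | zero => rw [pow_zero, pow_zero, pow_zero, one_kronecker_one]
  | succ k ih => rw [pow_succ, ih, ← mul_kronecker_mul, ← pow_succ, ← pow_succ]

theorem commute_one_kronecker_kronecker_one (A : Matrix n n R) (B : Matrix m m R) :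
    Commute (1 ⊗ₖ A) (B ⊗ₖ 1) := by
  simp only [Commute, SemiconjBy, ← mul_kronecker_mul, Matrix.one_mul, Matrix.mul_one]

theorem one_kronecker_add_kronecker_one_pow (A : Matrix n n R) (B : Matrix m m R) (i : ℕ) :
    (1 ⊗ₖ A + B ⊗ₖ 1) ^ i =
      ∑ k ∈ Finset.range (i + 1), i.choose k • ((B ^ (i - k)) ⊗ₖ (A ^ k)) := by
  rw [(commute_one_kronecker_kronecker_one A B).add_pow]
  refine Finset.sum_congr rfl fun k _ => ?_
  rw [kronecker_pow, kronecker_pow, one_pow, one_pow, ← mul_kronecker_mul, Matrix.one_mul,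
    Matrix.mul_one, ← Nat.cast_comm, ← nsmul_eq_mul]

end Square

theorem kronecker_mulVec_vec_mul_transpose [Fintype p] [DecidableEq p]
    (M : Matrix l m R) (N : Matrix q n R) (X : Matrix n p R) (Y : Matrix m p R) :
    (M ⊗ₖ N) *ᵥ (X * Yᵀ).vec = ((M * Y) ⊗ₖ (N * X)) *ᵥ (1 : Matrix p p R).vec := by
  simp only [kronecker_mulVec_vec, Matrix.mul_one, transpose_mul, Matrix.mul_assoc]

end Matrix

theorem stmt17 (n m s : ℕ) (A : Matrix (Fin n) (Fin n) ℝ) (B : Matrix (Fin m) (Fin m) ℝ)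
    (C1 : Matrix (Fin n) (Fin s) ℝ) (C2 : Matrix (Fin m) (Fin s) ℝ) (i : ℕ) :
    (((1 : Matrix (Fin m) (Fin m) ℝ) ⊗ₖ A + Bᵀ ⊗ₖ (1 : Matrix (Fin n) (Fin n) ℝ)) ^ i) *ᵥ
        _root_.vec (C1 * C2ᵀ) =
      ∑ l ∈ Finset.range (i + 1),
        (i.choose l : ℝ) • (((Bᵀ ^ (i - l) * C2) ⊗ₖ (A ^ l * C1)) *ᵥ
          _root_.vec (1 : Matrix (Fin s) (Fin s) ℝ)) := by
  rw [one_kronecker_add_kronecker_one_pow, sum_mulVec]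
  refine Finset.sum_congr rfl fun l _ => ?_
  rw [← Nat.cast_smul_eq_nsmul ℝ, smul_mulVec, vec_eq_matrix_vec, vec_eq_matrix_vec,
    kronecker_mulVec_vec_mul_transpose]
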